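/- (Comparison of skeletons) Let 𝔊 and 𝔊' be two mDAGs on the same node set. If there exist nodes x and y such that the undirected edge between x and y is present in the skeleton of 𝔊' but not in the skeleton of 𝔊, then 𝔊 does not observationally dominate 𝔊': for some assignment of finite cardinalities, some distribution realizable by 𝔊' is not realizable by 𝔊. -/

import Mathlib

open scoped Classical

/-! ## Basic structures: pDAGs and mDAGs -/

/-- A partitioned directed acyclic graph (pDAG) with visible node type `V` and
latent node type `L`.  Acyclicity is phrased via the existence of a topological
rank function, which for finite graphs is equivalent to the absence of directed
cycles. -/
structure pDAG (V L : Type) where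
  edge : V ⊕ L → V ⊕ L → Prop
  acyclic : ∃ rank : V ⊕ L → ℕ, ∀ a b, edge a b → rank a < rank b

/-- `P` is a probability distribution on a finite type. -/
def IsDist {α : Type} [Fintype α] (P : α → ℝ) : Prop :=
  (∀ x, 0 ≤ P x) ∧ ∑ x, P x = 1

/-- The joint assignment of outcomes to all (visible and latent) nodes obtained
from an assignment `xv` to the visible nodes and `xl` to the latent nodes. -/
def jointVal {V L : Type} (c : V → ℕ) (k : L → ℕ)
    (xv : (v : V) → Fin (c v)) (xl : (l : L) → Fin (k l)) :
    (a : V ⊕ L) → Fin (Sum.elim c k a)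
  | Sum.inl v => xv v
  | Sum.inr l => xl l

/-- A probability distribution `P` over the visible variables (with cardinalities `c`)
is realizable by the pDAG `G` (with classical unrestricted semantics, arbitrary finite
cardinalities of the latent variables) if there are latent cardinalities `k`, error
cardinalities `e`, error distributions `PE` and functions `f` (each depending only on
the values of the parents and the local error variable) whose induced marginal on the
visible variables is `P`. -/
def pDAG.Realizable {V L : Type} [Fintype V] [Fintype L] [DecidableEq V] [DecidableEq L]
    (G : pDAG V L) (c : V → ℕ) (P : ((v : V) → Fin (c v)) → ℝ) : Prop :=
  IsDist P ∧
  ∃ (k : L → ℕ) (e : V ⊕ L → ℕ)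
    (PE : (a : V ⊕ L) → Fin (e a) → ℝ)
    (f : (a : V ⊕ L) → ((b : V ⊕ L) → Fin (Sum.elim c k b)) → Fin (e a) →
      Fin (Sum.elim c k a)),
    (∀ a, IsDist (PE a)) ∧
    (∀ a g g' ε, (∀ b, G.edge b a → g b = g' b) → f a g ε = f a g' ε) ∧
    ∀ xv : (v : V) → Fin (c v),
      P xv = ∑ xl : (l : L) → Fin (k l), ∑ ε : (a : V ⊕ L) → Fin (e a),
        ∏ a : V ⊕ L,
          (if jointVal c k xv xl a = f a (jointVal c k xv xl) (ε a) then (1:ℝ) else 0)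
            * PE a (ε a)

/-- `G` observationally dominates `G'`: for every assignment of finite cardinalities to
the visible variables, every distribution realizable by `G'` is realizable by `G`. -/
def pDAG.ObsDominates {V L L' : Type} [Fintype V] [Fintype L] [Fintype L']
    [DecidableEq V] [DecidableEq L] [DecidableEq L']
    (G : pDAG V L) (G' : pDAG V L') : Prop :=
  ∀ (c : V → ℕ) (P : ((v : V) → Fin (c v)) → ℝ), G'.Realizable c P → G.Realizable c P

/-- An mDAG: a DAG on the node type `V` together with a simplicial complex on `V`
(a family of finite subsets containing all singletons and closed under subsets). -/
structure mDAG (V : Type) where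
  edge : V → V → Prop
  acyclic : ∃ rank : V → ℕ, ∀ a b, edge a b → rank a < rank b
  faces : Finset (Finset V)
  singleton_mem : ∀ v : V, {v} ∈ faces
  down_closed : ∀ A B : Finset V, A ⊆ B → B ∈ faces → A ∈ faces

namespace mDAG

variable {V : Type}

/-- A facet is an inclusion-maximal face of the simplicial complex. -/
def IsFacet (G : mDAG V) (A : Finset V) : Prop :=
  A ∈ G.faces ∧ ∀ B ∈ G.faces, A ⊆ B → A = B

/-- An mDAG is confounder-free if every facet of its simplicial complex is a singleton. -/
def ConfounderFree (G : mDAG V) : Prop :=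
  ∀ A : Finset V, G.IsFacet A → ∃ v : V, A = {v}

/-- An mDAG is directed-edge-free if its directed structure has no edges. -/
def DirectedEdgeFree (G : mDAG V) : Prop :=
  ∀ a b : V, ¬ G.edge a b

/-- `G` structurally dominates `G'` if the directed edges of `G'` are a subset of those
of `G` and the simplicial complex of `G'` is contained in that of `G`. -/
def StructDominates (G G' : mDAG V) : Prop :=
  (∀ a b : V, G'.edge a b → G.edge a b) ∧ G'.faces ⊆ G.faces

/-- The type of facets of an mDAG. -/
def Facets (G : mDAG V) : Type := {A : Finset V // G.IsFacet A}

noncomputable instance instFintypeFacets [Fintype V] [DecidableEq V] (G : mDAG V) :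
    Fintype G.Facets := Subtype.fintype _

noncomputable instance instDecidableEqFacets (G : mDAG V) :
    DecidableEq G.Facets := Classical.decEq _

/-- The canonical pDAG of an mDAG: the visible nodes carry the directed structure, and
there is one exogenous latent node per facet, whose children are exactly the members
of that facet. -/
def canon (G : mDAG V) : pDAG V G.Facets where
  edge a b :=
    match a, b with
    | Sum.inl u, Sum.inl v => G.edge u v
    | Sum.inr A, Sum.inl v => v ∈ A.1
    | _, Sum.inr _ => False
  acyclic := by
    obtain ⟨r, hr⟩ := G.acyclic
    refine ⟨Sum.elim (fun v => r v + 1) (fun _ => 0), ?_⟩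
    rintro (u | A) (v | B) h
    · simpa using hr u v h
    · exact h.elim
    · simp
    · exact h.elim

/-- Realizability of a distribution over the visible variables by an mDAG (via its
canonical pDAG). -/
def Realizable [Fintype V] [DecidableEq V] (G : mDAG V) (c : V → ℕ)
    (P : ((v : V) → Fin (c v)) → ℝ) : Prop :=
  G.canon.Realizable c P

/-- Observational dominance of mDAGs: for every assignment of finite cardinalities to
the visible nodes, every distribution realizable by `G'` is realizable by `G`. -/
def ObsDominates [Fintype V] [DecidableEq V] (G G' : mDAG V) : Prop :=
  ∀ (c : V → ℕ) (P : ((v : V) → Fin (c v)) → ℝ), G'.Realizable c P → G.Realizable c P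

/-- Observational equivalence of mDAGs. -/
def ObsEquiv [Fintype V] [DecidableEq V] (G G' : mDAG V) : Prop :=
  ∀ (c : V → ℕ) (P : ((v : V) → Fin (c v)) → ℝ), G.Realizable c P ↔ G'.Realizable c P

/-- Consistency with the fixed nodal ordering given by the order on `V`:
a later node is never an ancestor of an earlier node. -/
def OrderConsistent [LT V] (G : mDAG V) : Prop :=
  ∀ i j : V, i < j → ¬ Relation.TransGen G.edge j i

/-- `G'` is obtained from `G` by relabelling the nodes with the permutation `π`. -/
def IsRelabel (π : Equiv.Perm V) (G G' : mDAG V) : Prop :=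
  (∀ a b : V, G'.edge (π a) (π b) ↔ G.edge a b) ∧
  G'.faces = G.faces.image (Finset.image π)

/-- Adjacency in the skeleton of an mDAG: a directed edge in either direction, or
joint membership in some face of the simplicial complex. -/
def skelAdj (G : mDAG V) (u w : V) : Prop :=
  G.edge u w ∨ G.edge w u ∨ ∃ A ∈ G.faces, u ∈ A ∧ w ∈ A

end mDAG

/-! ## d-separation and e-separation -/

/-- Undirected adjacency underlying a directed graph. -/
def AdjRel {N : Type} (E : N → N → Prop) (a b : N) : Prop := E a b ∨ E b a

/-- The middle node `y` of a consecutive triple `(x, y, z)` of a path does not block the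
path given the conditioning set `C`: if `y` is a collider it has a descendant in `C`
(possibly itself), and if it is a non-collider it is not in `C`. -/
def ActiveTriple {N : Type} (E : N → N → Prop) (C : Set N) (x y z : N) : Prop :=
  ((E x y ∧ E z y) ∧ ∃ d ∈ C, Relation.ReflTransGen E y d) ∨
  (¬(E x y ∧ E z y) ∧ y ∉ C)

/-- Every consecutive triple of the path is active given the conditioning set `C`. -/
def TriplesActive {N : Type} (E : N → N → Prop) (C : Set N) : List N → Prop
  | x :: y :: z :: rest => ActiveTriple E C x y z ∧ TriplesActive E C (y :: z :: rest)
  | _ => True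

/-- `A` and `B` are d-connected given `C`: there is a (repetition-free, undirected)
path from a node of `A` to a node of `B` that is not blocked by `C`. -/
def DConnected {N : Type} (E : N → N → Prop) (A B C : Set N) : Prop :=
  ∃ p : List N, p.Chain' (AdjRel E) ∧ p.Nodup ∧
    (∃ a ∈ A, p.head? = some a) ∧ (∃ b ∈ B, p.getLast? = some b) ∧
    TriplesActive E C p

/-- d-separation: every undirected path from `A` to `B` is blocked by `C`. -/
def DSeparated {N : Type} (E : N → N → Prop) (A B C : Set N) : Prop :=
  ¬ DConnected E A B C

namespace mDAG

variable {V : Type}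

/-- d-separation of sets of (visible) nodes of an mDAG, evaluated in its canonical pDAG. -/
def dsep (G : mDAG V) (A B C : Set V) : Prop :=
  DSeparated G.canon.edge (Sum.inl '' A) (Sum.inl '' B) (Sum.inl '' C)

end mDAG

/-- The edge relation of a pDAG after deletion of the visible nodes in `D`. -/
def delEdge {V L : Type} (E : V ⊕ L → V ⊕ L → Prop) (D : Set V) (a b : V ⊕ L) : Prop :=
  E a b ∧ (∀ v, a = Sum.inl v → v ∉ D) ∧ (∀ v, b = Sum.inl v → v ∉ D)

namespace mDAG

variable {V : Type}

/-- e-separation: `A` and `B` are e-separated by `C` after deletion of `D` if they are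
d-separated by `C` in the subgraph of the canonical pDAG obtained by deleting the nodes
in `D`. -/
def eSep (G : mDAG V) (A B C D : Set V) : Prop :=
  DSeparated (delEdge G.canon.edge D) (Sum.inl '' A) (Sum.inl '' B) (Sum.inl '' C)

end mDAG

/-! ## Conditional independence -/

/-- The probability that the variables in `S` take the values specified by `g`. -/
noncomputable def margProb {V : Type} [Fintype V] [DecidableEq V] (c : V → ℕ)
    (P : ((v : V) → Fin (c v)) → ℝ) (S : Set V) (g : (v : V) → Fin (c v)) : ℝ :=
  ∑ x : (v : V) → Fin (c v), if ∀ v ∈ S, x v = g v then P x else 0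

/-- `X_A ⊥⊥ X_B | X_C` in the distribution `P`:
`P(X_A X_B | X_C) = P(X_A | X_C) P(X_B | X_C)` whenever the conditioning event has
positive probability. -/
def CondIndep {V : Type} [Fintype V] [DecidableEq V] (c : V → ℕ)
    (P : ((v : V) → Fin (c v)) → ℝ) (A B C : Set V) : Prop :=
  ∀ g : (v : V) → Fin (c v), 0 < margProb c P C g →
    margProb c P (A ∪ B ∪ C) g * margProb c P C g
      = margProb c P (A ∪ C) g * margProb c P (B ∪ C) g

/-! ## Districts, closures and densely connected pairs -/

namespace mDAG

variable {V : Type}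

/-- One step of connection through a common face, within the node subset `S`. -/
def faceStep (G : mDAG V) (S : Set V) (x y : V) : Prop :=
  x ∈ S ∧ y ∈ S ∧ ∃ F ∈ G.faces, x ∈ F ∧ y ∈ F

/-- The district of the set `A` in the sub-mDAG induced on `S`. -/
def disIn (G : mDAG V) (S A : Set V) : Set V :=
  {w | ∃ a ∈ A, Relation.ReflTransGen (G.faceStep S) a w}

/-- The ancestors of the set `A` (including `A` itself) in the directed structure
restricted to `S`. -/
def anIn (G : mDAG V) (S A : Set V) : Set V :=
  {w | ∃ a ∈ A, Relation.ReflTransGen (fun x y => x ∈ S ∧ y ∈ S ∧ G.edge x y) w a}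

/-- The alternating sequence of district and ancestor restrictions used to define
the closure of a set of nodes. -/
def closureSeq (G : mDAG V) (A : Set V) : ℕ → Set V
  | 0 => Set.univ
  | n + 1 =>
      if n % 2 = 0 then G.disIn (G.closureSeq A n) A else G.anIn (G.closureSeq A n) A

/-- The closure of a set of nodes: the limit (intersection) of the decreasing
alternating sequence. -/
def closure (G : mDAG V) (A : Set V) : Set V := ⋂ n, G.closureSeq A n

/-- `S` is bidirected-connected: it forms a single district of the induced sub-mDAG
on `S`. -/
def BidirConnected (G : mDAG V) (S : Set V) : Prop :=
  ∀ u ∈ S, ∀ w ∈ S, Relation.ReflTransGen (G.faceStep S) u w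

/-- Two distinct nodes `v`, `w` are densely connected. -/
def DenselyConnected (G : mDAG V) (v w : V) : Prop :=
  (∃ u ∈ G.closure {w}, G.edge v u) ∨
  (∃ u ∈ G.closure {v}, G.edge w u) ∨
  G.BidirConnected (G.closure {v, w})

/-- `S` is a realizable support of the mDAG `G` at cardinalities `c`: some distribution
realizable by `G` at `c` has support exactly `S`. -/
def RealizableSupport [Fintype V] [DecidableEq V] (G : mDAG V) (c : V → ℕ)
    (S : Set ((v : V) → Fin (c v))) : Prop :=
  ∃ P : ((v : V) → Fin (c v)) → ℝ, G.Realizable c P ∧ ∀ x, x ∈ S ↔ 0 < P x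

end mDAG

/-!
Make `x` and `y` bits, every other variable trivial, and let `x` and `y` be fair coins that
always agree. In `G'` the edge `x — y` supplies a node (`x`, `y`, or the latent node of a facet
containing both) that can broadcast one fair coin to both. In `G` the value of `x` is a function
of the errors of `x` and of the latent nodes over it, and likewise for `y`; with no edge and no
face joining `x` and `y` these two blocks of independent errors are disjoint, so the support of
every realizable distribution is a product set in `(x, y)`, while the target's is the diagonal.
-/

theorem Fin.eq_of_eq_one {n : ℕ} (h : n = 1) (u w : Fin n) : u = w := by
  subst h
  exact Subsingleton.elim u w

section ProductWeights

variable {ι : Type*} [Fintype ι] [DecidableEq ι] {β : ι → Type*} [∀ a, Fintype (β a)]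

noncomputable def piMass (w : ∀ a, β a → ℝ) (E : (∀ a, β a) → Prop) : ℝ :=
  ∑ ε with E ε, ∏ a, w a (ε a)

theorem piMass_eq_sum_ite (w : ∀ a, β a → ℝ) (E : (∀ a, β a) → Prop) :
    piMass w E = ∑ ε, (if E ε then (1 : ℝ) else 0) * ∏ a, w a (ε a) := by
  simp only [piMass, Finset.sum_filter, ite_mul, one_mul, zero_mul]

theorem piMass_pos_iff {w : ∀ a, β a → ℝ} (hw : ∀ a b, 0 ≤ w a b) {E : (∀ a, β a) → Prop} :
    0 < piMass w E ↔ ∃ ε, E ε ∧ 0 < ∏ a, w a (ε a) :=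
  (Finset.sum_pos_iff_of_nonneg fun ε _ => Finset.prod_nonneg fun a _ => hw a (ε a)).trans
    (by simp only [Finset.mem_filter, Finset.mem_univ, true_and])

/-- Splice a witness of `A` on `s` with a witness of `B` off `s`. -/
theorem piMass_and_pos {w : ∀ a, β a → ℝ} (hw : ∀ a b, 0 ≤ w a b) {s : Set ι}
    {A A' B B' : (∀ a, β a) → Prop} (hA : DependsOn A s) (hB : DependsOn B sᶜ)
    (h : 0 < piMass w fun ε => A ε ∧ B' ε) (h' : 0 < piMass w fun ε => A' ε ∧ B ε) :
    0 < piMass w fun ε => A ε ∧ B ε := by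
  obtain ⟨ε, ⟨hAε, -⟩, hε⟩ := (piMass_pos_iff hw).1 h
  obtain ⟨ε', ⟨-, hBε'⟩, hε'⟩ := (piMass_pos_iff hw).1 h'
  have hfactor : ∀ (η : ∀ a, β a), 0 < ∏ a, w a (η a) → ∀ a, 0 < w a (η a) := fun η hη a =>
    (hw a (η a)).lt_of_ne' ((Finset.prod_ne_zero_iff.1 hη.ne') a (Finset.mem_univ a))
  refine (piMass_pos_iff hw).2 ⟨s.piecewise ε ε', ⟨?_, ?_⟩, Finset.prod_pos fun a _ => ?_⟩
  · exact (hA fun a ha => Set.piecewise_eq_of_mem s ε ε' ha) ▸ hAε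
  · exact (hB fun a ha => Set.piecewise_eq_of_notMem s ε ε' ha) ▸ hBε'
  · by_cases ha : a ∈ s
    · rw [Set.piecewise_eq_of_mem s ε ε' ha]; exact hfactor ε hε a
    · rw [Set.piecewise_eq_of_notMem s ε ε' ha]; exact hfactor ε' hε' a

theorem sum_pi_fin_eq_sum_range {M : Type*} [AddCommMonoid M] {e : ι → ℕ} {a₀ : ι}
    (he : ∀ a ≠ a₀, e a = 1) (F : ℕ → M) :
    ∑ ε : (∀ a, Fin (e a)), F (ε a₀) = ∑ t ∈ Finset.range (e a₀), F t := by
  rw [← Fin.sum_univ_eq_sum_range]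
  refine Fintype.sum_bijective (fun ε => ε a₀) ⟨fun ε ε' h => ?_, fun t => ?_⟩ _ _ fun _ => rfl
  · funext a
    by_cases ha : a = a₀
    · subst ha; exact h
    · exact Fin.eq_of_eq_one (he a ha) _ _
  · have hpos : ∀ a, 0 < e a := fun a => by
      by_cases ha : a = a₀
      · subst ha; exact t.pos
      · rw [he a ha]; exact Nat.one_pos
    exact ⟨Function.update (fun a => ⟨0, hpos a⟩) a₀ t, Function.update_self ..⟩

end ProductWeights

theorem isDist_inv_natCast {n : ℕ} (hn : n ≠ 0) : IsDist fun _ : Fin n => (n : ℝ)⁻¹ :=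
  ⟨fun _ => by positivity, by simp [hn]⟩

section StructuralModel

variable {V L : Type} [Fintype V] [Fintype L] [DecidableEq V] [DecidableEq L]
  {c : V → ℕ} {k : L → ℕ} {e : V ⊕ L → ℕ}

/-- When the latent nodes have no parents, their values are functions of their own errors,
so summing out the latent values leaves the mass of the errors under which the visible
equations hold. -/
theorem pDAG.sum_latent_eq_piMass (G : pDAG V L) (hexo : ∀ b l, ¬ G.edge b (.inr l))
    (w : (a : V ⊕ L) → Fin (e a) → ℝ)
    (f : (a : V ⊕ L) → ((b : V ⊕ L) → Fin (Sum.elim c k b)) → Fin (e a) →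
      Fin (Sum.elim c k a))
    (hloc : ∀ a g g' t, (∀ b, G.edge b a → g b = g' b) → f a g t = f a g' t)
    (g₀ : (b : V ⊕ L) → Fin (Sum.elim c k b)) (xv : (v : V) → Fin (c v)) :
    ∑ xl : (l : L) → Fin (k l), ∑ ε : (a : V ⊕ L) → Fin (e a),
        ∏ a : V ⊕ L,
          (if jointVal c k xv xl a = f a (jointVal c k xv xl) (ε a) then (1:ℝ) else 0)
            * w a (ε a)
      = piMass w fun ε => ∀ v, xv v =
          f (.inl v) (jointVal c k xv fun l => f (.inr l) g₀ (ε (.inr l))) (ε (.inl v)) := by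
  rw [Finset.sum_comm, piMass_eq_sum_ite]
  refine Finset.sum_congr rfl fun ε _ => ?_
  set xlε : (l : L) → Fin (k l) := fun l => f (.inr l) g₀ (ε (.inr l))
  have hlatent : ∀ g l, f (.inr l) g (ε (.inr l)) = xlε l := fun g l =>
    hloc _ _ _ _ fun b hb => (hexo b l hb).elim
  have hsolve : ∀ xl, (∀ a, jointVal c k xv xl a = f a (jointVal c k xv xl) (ε a)) ↔
      xl = xlε ∧ ∀ v, xv v = f (.inl v) (jointVal c k xv xlε) (ε (.inl v)) := by
    intro xl
    simp only [Sum.forall, jointVal, hlatent]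
    constructor
    · rintro ⟨hvis, hlat⟩
      obtain rfl : xl = xlε := funext hlat
      exact ⟨rfl, hvis⟩
    · rintro ⟨rfl, hvis⟩
      exact ⟨hvis, fun _ => rfl⟩
  simp_rw [Finset.prod_mul_distrib, Fintype.prod_boole, hsolve, ite_and, ite_mul, one_mul,
    zero_mul]
  exact Fintype.sum_ite_eq' xlε _

end StructuralModel

section Broadcast

variable {ι : Type} [DecidableEq ι] {m : ι → ℕ} (hm : ∀ a, 0 < m a) (a₀ : ι) (e : ι → ℕ)

def broadcast (a : ι) (g : (b : ι) → Fin (m b)) (t : Fin (e a)) : Fin (m a) :=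
  ⟨(if a = a₀ then t.val else (g a₀).val) % m a, Nat.mod_lt _ (hm a)⟩

variable {hm a₀ e}

theorem broadcast_congr {a : ι} {g g' : (b : ι) → Fin (m b)} (t : Fin (e a))
    (h : a ≠ a₀ → m a ≠ 1 → g a₀ = g' a₀) :
    broadcast hm a₀ e a g t = broadcast hm a₀ e a g' t := by
  by_cases ha : a = a₀
  · simp only [broadcast, if_pos ha]
  by_cases hma : m a = 1
  · exact Fin.eq_of_eq_one hma _ _
  · simp only [broadcast, if_neg ha, h ha hma]

end Broadcast

section BroadcastSolution

variable {V L : Type} {c : V → ℕ} {k : L → ℕ} [DecidableEq V] [DecidableEq L]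
  {hm : ∀ a, 0 < Sum.elim c k a} {a₀ : V ⊕ L} {e : V ⊕ L → ℕ}

theorem broadcast_visible_iff (g₀ : (b : V ⊕ L) → Fin (Sum.elim c k b))
    (xv : (v : V) → Fin (c v)) (ε : (a : V ⊕ L) → Fin (e a))
    (hε : (ε a₀ : ℕ) < Sum.elim c k a₀) :
    (∀ v, xv v = broadcast hm a₀ e (.inl v)
        (jointVal c k xv fun l => broadcast hm a₀ e (.inr l) g₀ (ε (.inr l))) (ε (.inl v)))
      ↔ ∀ v, (xv v : ℕ) = (ε a₀ : ℕ) % c v := by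
  set s : ℕ := (ε a₀).val
  set J := jointVal c k xv fun l => broadcast hm a₀ e (.inr l) g₀ (ε (.inr l))
  have hJ : ∀ a, a = a₀ → (∀ u, a = .inl u → (xv u : ℕ) = s) → (J a : ℕ) = s := by
    rintro (u | l) ha hvis
    · exact hvis u rfl
    · subst ha
      exact (congrArg (· % k l) (if_pos rfl)).trans (Nat.mod_eq_of_lt hε)
  have hmod : ∀ u, .inl u = a₀ → s % c u = s := fun u hu =>
    Nat.mod_eq_of_lt (show s < Sum.elim c k (.inl u) from hu ▸ hε)
  have hvis : ∀ v, xv v = broadcast hm a₀ e (.inl v) J (ε (.inl v))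
      ↔ (xv v : ℕ) = (if .inl v = a₀ then s else (J a₀ : ℕ)) % c v := by
    intro v
    refine Fin.ext_iff.trans (Eq.congr_right ?_)
    by_cases hv : .inl v = a₀
    · subst hv; rfl
    · exact congrArg (· % c v) ((if_neg hv).trans (if_neg hv).symm)
  rw [forall_congr' hvis]
  constructor
  · intro h v
    have hJs := hJ a₀ rfl fun u hu => (h u).trans (by rw [if_pos hu.symm, hmod u hu.symm])
    rw [h v, hJs, ite_self]
  · intro h v
    have hJs := hJ a₀ rfl fun u hu => (h u).trans (hmod u hu.symm)
    rw [h v, hJs, ite_self]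

end BroadcastSolution

namespace mDAG

variable {V : Type}

theorem edge_irrefl (G : mDAG V) (v : V) : ¬ G.edge v v := by
  obtain ⟨r, hr⟩ := G.acyclic
  exact fun h => lt_irrefl _ (hr v v h)

theorem skelAdj_self (G : mDAG V) (v : V) : G.skelAdj v v :=
  .inr <| .inr ⟨{v}, G.singleton_mem v, Finset.mem_singleton_self v, Finset.mem_singleton_self v⟩

theorem canon_not_edge_inr (G : mDAG V) (b : V ⊕ G.Facets) (l : G.Facets) :
    ¬ G.canon.edge b (.inr l) := by
  cases b <;> exact id

theorem exists_isFacet_superset [DecidableEq V] (G : mDAG V) {A : Finset V}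
    (hA : A ∈ G.faces) : ∃ M, G.IsFacet M ∧ A ⊆ M := by
  obtain ⟨M, hM, hmax⟩ := Finset.exists_max_image ({B ∈ G.faces | A ⊆ B})
    Finset.card ⟨A, Finset.mem_filter.2 ⟨hA, subset_rfl⟩⟩
  obtain ⟨hMfaces, hAM⟩ := Finset.mem_filter.1 hM
  exact ⟨M, ⟨hMfaces, fun B hB hMB => Finset.eq_of_subset_of_card_le hMB
    (hmax B (Finset.mem_filter.2 ⟨hB, hAM.trans hMB⟩))⟩, hAM⟩

/-- The error variables on which the value of `v` can depend once the other visible nodes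
are frozen. -/
def selfAndLatentParents (G : mDAG V) (v : V) : Set (V ⊕ G.Facets) :=
  {a | a = .inl v ∨ ∃ l : G.Facets, a = .inr l ∧ v ∈ l.1}

theorem selfAndLatentParents_subset_compl {G : mDAG V} {x y : V} (hsk : ¬ G.skelAdj x y) :
    G.selfAndLatentParents y ⊆ (G.selfAndLatentParents x)ᶜ := by
  rintro a (rfl | ⟨l, rfl, hyl⟩) (hx | ⟨l', hl', hxl'⟩)
  · exact hsk (Sum.inl_injective hx ▸ G.skelAdj_self x)
  · exact Sum.inl_ne_inr hl'
  · exact Sum.inr_ne_inl hx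
  · obtain rfl := Sum.inr_injective hl'
    exact hsk (.inr <| .inr ⟨l.1, l.2.1, hxl', hyl⟩)

theorem card_eq_one_of_edge {G : mDAG V} {x y : V} (hsk : ¬ G.skelAdj x y) {c : V → ℕ}
    (hc : ∀ v, v ≠ x → v ≠ y → c v = 1) {u v : V} (hv : v = x ∨ v = y) (huv : G.edge u v) :
    c u = 1 := by
  refine hc u ?_ ?_ <;> rintro rfl <;> rcases hv with rfl | rfl
  · exact G.edge_irrefl _ huv
  · exact hsk (.inl huv)
  · exact hsk (.inr (.inl huv))
  · exact G.edge_irrefl _ huv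

variable [Fintype V] [DecidableEq V]

/-- Without an edge `x — y` in the skeleton, and with every other visible variable trivial,
`x` and `y` are functions of disjoint blocks of independent errors, so the support of a
realizable distribution is a product in the coordinates `x` and `y`. -/
theorem Realizable.pos_of_not_skelAdj {G : mDAG V} {c : V → ℕ}
    {P : ((v : V) → Fin (c v)) → ℝ} (hP : G.Realizable c P) {x y : V}
    (hsk : ¬ G.skelAdj x y) (hc : ∀ v, v ≠ x → v ≠ y → c v = 1)
    {z z₁ z₂ : (v : V) → Fin (c v)} (h₁ : 0 < P z₁) (h₂ : 0 < P z₂)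
    (hx : z x = z₁ x) (hy : z y = z₂ y) : 0 < P z := by
  obtain ⟨-, k, e, w, f, hw, hloc, hsum⟩ := hP
  obtain ⟨xl₁⟩ : Nonempty ((l : G.Facets) → Fin (k l)) := by
    by_contra hempty
    simp [hsum z₁, not_nonempty_iff.1 hempty] at h₁
  set xlε : ((a : V ⊕ G.Facets) → Fin (e a)) → (l : G.Facets) → Fin (k l) :=
    fun ε l => f (.inr l) (jointVal c k z xl₁) (ε (.inr l))
  set node : (v : V) → ((a : V ⊕ G.Facets) → Fin (e a)) → Fin (c v) :=
    fun v ε => f (.inl v) (jointVal c k z (xlε ε)) (ε (.inl v))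
  have hnode : ∀ xv ε v, v = x ∨ v = y →
      f (.inl v) (jointVal c k xv (xlε ε)) (ε (.inl v)) = node v ε := by
    refine fun xv ε v hv => hloc _ _ _ _ fun b hb => ?_
    rcases b with u | l
    · exact Fin.eq_of_eq_one (card_eq_one_of_edge hsk hc hv hb) _ _
    · rfl
  have hdep : ∀ v, DependsOn (node v) (G.selfAndLatentParents v) := by
    intro v ε ε' hεε'
    simp only [node, hεε' _ (.inl rfl)]
    refine hloc _ _ _ _ fun b hb => ?_
    rcases b with u | l
    · rfl
    · exact congrArg (f (.inr l) _) (hεε' _ (.inr ⟨l, rfl, hb⟩))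
  have hPeq : ∀ xv, P xv = piMass w fun ε => xv x = node x ε ∧ xv y = node y ε := by
    intro xv
    rw [hsum, G.canon.sum_latent_eq_piMass G.canon_not_edge_inr w f hloc (jointVal c k z xl₁)]
    refine congrArg (piMass w) (funext fun ε => propext ⟨fun h => ?_, fun ⟨h₁, h₂⟩ v => ?_⟩)
    · exact ⟨(h x).trans (hnode xv ε x (.inl rfl)), (h y).trans (hnode xv ε y (.inr rfl))⟩
    · rcases eq_or_ne v x with rfl | hvx
      · exact h₁.trans (hnode xv ε v (.inl rfl)).symm
      rcases eq_or_ne v y with rfl | hvy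
      · exact h₂.trans (hnode xv ε v (.inr rfl)).symm
      exact Fin.eq_of_eq_one (hc v hvx hvy) _ _
  rw [hPeq] at h₁ h₂ ⊢
  have hdep_y := (hdep y).mono (selfAndLatentParents_subset_compl hsk)
  exact piMass_and_pos (fun a => (hw a).1) (s := G.selfAndLatentParents x)
    (fun _ _ h => by rw [hdep x h]) (fun _ _ h => by rw [hdep_y h]) (hx ▸ h₁) (hy ▸ h₂)

end mDAG

section CorrelatedPair

variable {V : Type} [DecidableEq V]

def pairCard (x y v : V) : ℕ := if v = x ∨ v = y then 2 else 1

theorem pairCard_pos (x y v : V) : 0 < pairCard x y v := by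
  unfold pairCard; split_ifs <;> omega

theorem pairCard_left (x y : V) : pairCard x y x = 2 := if_pos (.inl rfl)

theorem pairCard_right (x y : V) : pairCard x y y = 2 := if_pos (.inr rfl)

theorem pairCard_of_ne {x y v : V} (hx : v ≠ x) (hy : v ≠ y) : pairCard x y v = 1 :=
  if_neg (by tauto)

def constConfig (x y : V) (t : ℕ) : (v : V) → Fin (pairCard x y v) :=
  fun v => ⟨t % pairCard x y v, Nat.mod_lt _ (pairCard_pos x y v)⟩

theorem eq_constConfig_iff {x y : V} {xv : (v : V) → Fin (pairCard x y v)} {t : ℕ} :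
    xv = constConfig x y t ↔ ∀ v, (xv v : ℕ) = t % pairCard x y v :=
  funext_iff.trans (forall_congr' fun _ => Fin.ext_iff)

variable [Fintype V]

/-- `x` and `y` are fair coins that always agree; every other variable is trivial. -/
noncomputable def corrDist (x y : V) (xv : (v : V) → Fin (pairCard x y v)) : ℝ :=
  ∑ t ∈ Finset.range 2, if xv = constConfig x y t then 2⁻¹ else 0

theorem corrDist_constConfig_pos (x y : V) {t : ℕ} (ht : t < 2) :
    0 < corrDist x y (constConfig x y t) :=
  Finset.sum_pos' (fun _ _ => by positivity)
    ⟨t, Finset.mem_range.2 ht, by rw [if_pos rfl]; norm_num⟩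

theorem corrDist_update_eq_zero {x y : V} (hxy : x ≠ y) :
    corrDist x y (Function.update (constConfig x y 0) y (constConfig x y 1 y)) = 0 := by
  refine Finset.sum_eq_zero fun t _ => if_neg fun h => ?_
  have hx : (constConfig x y t x).val = 0 % pairCard x y x := by
    rw [← h, Function.update_of_ne hxy]; rfl
  have hy : (constConfig x y t y).val = 1 % pairCard x y y := by
    rw [← h, Function.update_self]; rfl
  simp only [constConfig, pairCard_left, pairCard_right] at hx hy
  omega

theorem isDist_corrDist (x y : V) : IsDist (corrDist x y) := by
  refine ⟨fun xv => Finset.sum_nonneg fun t _ => by positivity, ?_⟩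
  simp only [corrDist]
  rw [Finset.sum_comm]
  norm_num [Finset.sum_range_succ]

theorem mDAG.not_realizable_corrDist (G : mDAG V) {x y : V} (hsk : ¬ G.skelAdj x y) :
    ¬ G.Realizable (pairCard x y) (corrDist x y) := by
  have hxy : x ≠ y := fun h => hsk (h ▸ G.skelAdj_self x)
  intro hP
  refine (hP.pos_of_not_skelAdj hsk (fun v => pairCard_of_ne)
    (corrDist_constConfig_pos x y (t := 0) (by norm_num))
    (corrDist_constConfig_pos x y (t := 1) (by norm_num))
    (Function.update_of_ne hxy ..) (Function.update_self ..)).ne' ?_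
  exact corrDist_update_eq_zero hxy

end CorrelatedPair

namespace mDAG

variable {V : Type} [Fintype V] [DecidableEq V]

theorem realizable_corrDist_of_source (H : mDAG V) {x y : V} (k : H.Facets → ℕ)
    (a₀ : V ⊕ H.Facets) (h₂ : Sum.elim (pairCard x y) k a₀ = 2)
    (hk : ∀ l, .inr l ≠ a₀ → k l = 1) (hx : a₀ = .inl x ∨ H.canon.edge a₀ (.inl x))
    (hy : a₀ = .inl y ∨ H.canon.edge a₀ (.inl y)) :
    H.Realizable (pairCard x y) (corrDist x y) := by
  set m := Sum.elim (pairCard x y) k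
  have hm : ∀ a, 0 < m a := by
    rintro (v | l)
    · exact pairCard_pos x y v
    · by_cases hl : .inr l = a₀
      · rw [← hl] at h₂; simp only [m] at h₂ ⊢; omega
      · simp only [m, Sum.elim_inr, hk l hl, Nat.one_pos]
  have hpar : ∀ a ≠ a₀, m a ≠ 1 → H.canon.edge a₀ a := by
    rintro (v | l) ha hma
    · rcases eq_or_ne v x with rfl | hvx
      · exact hx.resolve_left (Ne.symm ha)
      rcases eq_or_ne v y with rfl | hvy
      · exact hy.resolve_left (Ne.symm ha)
      exact absurd (pairCard_of_ne hvx hvy) hma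
    · exact absurd (hk l ha) hma
  set e : V ⊕ H.Facets → ℕ := fun a => if a = a₀ then 2 else 1
  have he : ∀ a ≠ a₀, e a = 1 := fun a ha => if_neg ha
  have he₀ : e a₀ = 2 := if_pos rfl
  have hloc : ∀ a g g' t, (∀ b, H.canon.edge b a → g b = g' b) →
      broadcast hm a₀ e a g t = broadcast hm a₀ e a g' t := fun a _ _ t h =>
    broadcast_congr t fun ha hma => h a₀ (hpar a ha hma)
  refine ⟨isDist_corrDist x y, k, e, fun a _ => (e a : ℝ)⁻¹, broadcast hm a₀ e,
    fun a => isDist_inv_natCast (by simp only [e]; split_ifs <;> norm_num), hloc, fun xv => ?_⟩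
  have hsol : ∀ ε : (a : V ⊕ H.Facets) → Fin (e a), (∀ v, xv v = broadcast hm a₀ e (.inl v)
      (jointVal _ k xv fun l => broadcast hm a₀ e (.inr l) (fun b => ⟨0, hm b⟩) (ε (.inr l)))
        (ε (.inl v))) ↔ xv = constConfig x y (ε a₀) := fun ε =>
    (broadcast_visible_iff _ xv ε (show (ε a₀ : ℕ) < m a₀ from h₂ ▸ he₀ ▸ (ε a₀).isLt)).trans
      eq_constConfig_iff.symm
  have hprod : ∏ a, (e a : ℝ)⁻¹ = 2⁻¹ := by
    rw [Fintype.prod_eq_single a₀ fun a ha => by rw [he a ha, Nat.cast_one, inv_one], he₀,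
      Nat.cast_ofNat]
  rw [H.canon.sum_latent_eq_piMass H.canon_not_edge_inr (fun a _ => (e a : ℝ)⁻¹) _ hloc
    (fun b => ⟨0, hm b⟩), piMass_eq_sum_ite]
  simp_rw [hsol, hprod]
  rw [sum_pi_fin_eq_sum_range he (fun t => (if xv = constConfig x y t then (1:ℝ) else 0) * _)]
  simp only [corrDist, he₀, ite_mul, one_mul, zero_mul]

end mDAG

/-- (Comparison of skeletons.)  Let `G` and `G'` be two mDAGs on the
same node set.  If some undirected edge `x — y` is present in the skeleton of `G'` but
not in the skeleton of `G`, then `G` does not observationally dominate `G'`: for some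
assignment of finite cardinalities, some distribution realizable by `G'` is not
realizable by `G`. -/
theorem comparison_of_skeletons
    {V : Type} [Fintype V] [DecidableEq V] (G G' : mDAG V) (x y : V)
    (h' : G'.skelAdj x y) (h : ¬ G.skelAdj x y) :
    ∃ (c : V → ℕ) (P : ((v : V) → Fin (c v)) → ℝ),
      G'.Realizable c P ∧ ¬ G.Realizable c P := by
  refine ⟨pairCard x y, corrDist x y, ?_, G.not_realizable_corrDist h⟩
  rcases h' with hxy | hyx | ⟨A, hA, hxA, hyA⟩
  · exact G'.realizable_corrDist_of_source (fun _ => 1) (.inl x) (pairCard_left x y)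
      (fun _ _ => rfl) (.inl rfl) (.inr hxy)
  · exact G'.realizable_corrDist_of_source (fun _ => 1) (.inl y) (pairCard_right x y)
      (fun _ _ => rfl) (.inr hyx) (.inl rfl)
  · obtain ⟨M, hM, hAM⟩ := G'.exists_isFacet_superset hA
    exact G'.realizable_corrDist_of_source (fun l => if l = ⟨M, hM⟩ then 2 else 1)
      (.inr ⟨M, hM⟩) (if_pos rfl) (fun l hl => if_neg fun h => hl (congrArg _ h))
      (.inr (hAM hxA)) (.inr (hAM hyA))
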